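/- arXiv:math/9908143 — 3 statements merged into one kernel-verified Lean document; each statement's English description precedes it below -/
import Mathlib

section
/- For all integers n ≥ 0 and parameters a, b, c (as rational functions, avoiding zero denominators), the Saalschütz identity holds: ∑_{k=0}^{n} ((-n)_k (a)_k (b)_k) / ((c)_k (-n+a+b-c+1)_k k!) = ((c-a)_n (c-b)_n) / ((c)_n (c-a-b)_n). -/
/-- The Pochhammer symbol (rising factorial) `(a)_k = a (a+1) ⋯ (a+k-1)`. -/
noncomputable def poch (a : ℝ) (k : ℕ) : ℝ := ∏ j ∈ Finset.range k, (a + j)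

lemma poch_zero (a : ℝ) : poch a 0 = 1 := by simp [poch]

lemma poch_succ (a : ℝ) (k : ℕ) : poch a (k + 1) = poch a k * (a + k) := by
  simp [poch, Finset.prod_range_succ]

lemma poch_congr {a b : ℝ} (h : a = b) (k : ℕ) : poch a k = poch b k := by rw [h]

lemma poch_succ' (a : ℝ) (k : ℕ) : poch a (k + 1) = a * poch (a + 1) k := by
  unfold poch
  rw [Finset.prod_range_succ']
  rw [mul_comm]
  congr 1
  · push_cast; simp
  · apply Finset.prod_congr rfl
    intro i _
    push_cast
    ring

lemma poch_add (a : ℝ) (m l : ℕ) : poch a (m + l) = poch a m * poch (a + m) l := by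
  unfold poch
  rw [Finset.prod_range_add]
  congr 1
  apply Finset.prod_congr rfl
  intro i _
  push_cast
  ring

lemma poch_reflect (x : ℝ) (n : ℕ) : poch (-x - n + 1) n = (-1) ^ n * poch x n := by
  induction n with
  | zero => simp [poch_zero]
  | succ n ih =>
    have h1 : (-x - (n + 1 : ℕ) + 1 : ℝ) = (-x - n + 1) - 1 := by push_cast; ring
    rw [poch_congr h1, poch_succ' (-x - n + 1 - 1) n]
    have h2 : (-x - (n:ℝ) + 1 - 1 + 1) = -x - n + 1 := by ring
    rw [poch_congr h2, ih, poch_succ]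
    push_cast
    ring

lemma poch_neg_nat (n k : ℕ) (h : k ≤ n) :
    poch (-(n : ℝ)) k = (-1) ^ k * (n.descFactorial k : ℝ) := by
  induction k with
  | zero => simp [poch_zero]
  | succ k ih =>
    have hk : k ≤ n := Nat.le_of_succ_le h
    rw [poch_succ, ih hk, Nat.descFactorial_succ]
    have hnk : ((n - k : ℕ) : ℝ) = (n : ℝ) - k := by
      rw [Nat.cast_sub hk]
    push_cast [Nat.cast_sub hk]
    ring

/-- The cleared-denominator summand. -/
noncomputable def TT (a b c : ℝ) (n k : ℕ) : ℝ :=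
  (-1) ^ k * (n.choose k : ℝ) * poch a k * poch b k *
    poch (c + k) (n - k) * poch (a + b - c + 1 - n + k) (n - k)

lemma TT_zero (a b c : ℝ) {n k : ℕ} (h : n < k) : TT a b c n k = 0 := by
  simp [TT, Nat.choose_eq_zero_of_lt h]

lemma TT_local (a b c : ℝ) (k m : ℕ) :
    TT a b c (k + m + 1) (k + 1) =
      ((a + k + 1) * (b + k + 1) - (c - a + (k + m : ℕ)) * (c - b + (k + m : ℕ))) *
          TT a b c (k + m) (k + 1) -
        (a + k) * (b + k) * TT a b c (k + m) k := by
  cases m with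
  | zero =>
    simp only [Nat.add_zero]
    rw [TT_zero a b c (by omega : k < k + 1)]
    simp only [TT, Nat.sub_self, Nat.add_sub_cancel_left, Nat.choose_self]
    rw [poch_succ a k, poch_succ b k]
    simp only [poch_zero]
    push_cast
    ring
  | succ m =>
    unfold TT
    rw [show k + (m + 1) + 1 - (k + 1) = m + 1 from by omega,
        show k + (m + 1) - (k + 1) = m from by omega,
        show k + (m + 1) - k = m + 1 from by omega]
    -- Pascal
    have hpascal : ((k + (m + 1) + 1).choose (k + 1) : ℝ) =
        ((k + (m + 1)).choose k : ℝ) + ((k + (m + 1)).choose (k + 1) : ℝ) := by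
      rw [← Nat.cast_add, ← Nat.choose_succ_succ']
    have hch : ((k + (m + 1)).choose (k + 1) : ℝ) * (k + 1) =
        ((k + (m + 1)).choose k : ℝ) * (m + 1) := by
      have := Nat.choose_succ_right_eq (k + (m + 1)) k
      rw [show k + (m + 1) - k = m + 1 from by omega] at this
      exact_mod_cast congrArg (Nat.cast : ℕ → ℝ) this
    -- poch rewrites
    rw [poch_succ a k, poch_succ b k]
    rw [poch_congr (show (c + ((k:ℕ)+1:ℕ) : ℝ) = (c + k + 1) from by push_cast; ring) (m+1)]
    rw [poch_congr (show (c + (k:ℕ) : ℝ) = (c + k) from by push_cast; ring) (m+1)]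
    rw [poch_succ (c + k + 1) m, poch_succ' (c + k) (m)]
    rw [poch_congr (show (a + b - c + 1 - ((k + (m+1) + 1 : ℕ) : ℝ) + ((k+1 : ℕ) : ℝ)) =
        (a + b - c - m) from by push_cast; ring) (m+1)]
    rw [poch_congr (show (a + b - c + 1 - ((k + (m+1) : ℕ) : ℝ) + ((k : ℕ) : ℝ)) =
        (a + b - c - m) from by push_cast; ring) (m+1)]
    rw [poch_succ' (a + b - c - m) m]
    rw [poch_congr (show (a + b - c + 1 - ((k + (m+1) : ℕ) : ℝ) + ((k+1 : ℕ) : ℝ)) =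
        (a + b - c - m + 1) from by push_cast; ring) m]
    rw [poch_congr (show (c + ((k+1 : ℕ) : ℝ) : ℝ) = (c + k + 1) from by push_cast; ring) m]
    rw [hpascal]
    push_cast
    linear_combination (-(-1:ℝ)^(k+1) * poch a k * poch b k * (a+k) * (b+k) *
      poch (c + k + 1) m * poch (a + b - c - m + 1) m * (a + b - c - m)) * hch

lemma TT_local' (a b c : ℝ) {n k : ℕ} (h : k ≤ n) :
    TT a b c (n + 1) (k + 1) =
      ((a + k + 1) * (b + k + 1) - (c - a + n) * (c - b + n)) * TT a b c n (k + 1) -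
        (a + k) * (b + k) * TT a b c n k := by
  have hm := TT_local a b c k (n - k)
  rw [Nat.add_sub_cancel' h] at hm
  exact hm

lemma TT_local0 (a b c : ℝ) (n : ℕ) :
    TT a b c (n + 1) 0 = (a * b - (c - a + n) * (c - b + n)) * TT a b c n 0 := by
  unfold TT
  simp only [Nat.sub_zero, Nat.choose_zero_right, Nat.cast_one, pow_zero, poch_zero]
  rw [poch_congr (show (c + ((0:ℕ):ℝ)) = c from by push_cast; ring) (n+1),
      poch_congr (show (c + ((0:ℕ):ℝ)) = c from by push_cast; ring) n,
      poch_congr (show (a + b - c + 1 - ((n+1:ℕ):ℝ) + ((0:ℕ):ℝ)) = (a + b - c - n) from by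
        push_cast; ring) (n+1),
      poch_congr (show (a + b - c + 1 - ((n:ℕ):ℝ) + ((0:ℕ):ℝ)) = (a + b - c - n + 1) from by
        push_cast; ring) n,
      poch_succ c n, poch_succ' (a + b - c - n) n]
  push_cast
  ring

lemma TT_sum (a b c : ℝ) : ∀ n : ℕ,
    ∑ k ∈ Finset.range (n + 1), TT a b c n k = (-1) ^ n * poch (c - a) n * poch (c - b) n := by
  intro n
  induction n with
  | zero => simp [TT, poch_zero]
  | succ n ih =>
    rw [Finset.sum_range_succ']
    have h1 : ∑ k ∈ Finset.range (n + 1), TT a b c (n + 1) (k + 1)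
        = ∑ k ∈ Finset.range (n + 1),
          (((a + ((k+1:ℕ):ℝ)) * (b + ((k+1:ℕ):ℝ)) * TT a b c n (k+1)
              - (a + ((k:ℕ):ℝ)) * (b + ((k:ℕ):ℝ)) * TT a b c n k)
            - (c - a + n) * (c - b + n) * TT a b c n (k + 1)) := by
      apply Finset.sum_congr rfl
      intro k hk
      rw [TT_local' a b c (Nat.lt_succ_iff.mp (Finset.mem_range.mp hk))]
      push_cast
      ring
    rw [h1, Finset.sum_sub_distrib]
    have h2 := Finset.sum_range_sub (fun j => (a + ((j:ℕ):ℝ)) * (b + ((j:ℕ):ℝ)) * TT a b c n j) (n + 1)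
    rw [h2]
    rw [← Finset.mul_sum]
    have h3 : ∑ k ∈ Finset.range (n + 1), TT a b c n (k + 1)
        = (∑ k ∈ Finset.range (n + 1), TT a b c n k) - TT a b c n 0 := by
      have h4 := Finset.sum_range_succ' (TT a b c n) (n + 1)
      rw [Finset.sum_range_succ, TT_zero a b c (Nat.lt_succ_self n)] at h4
      linarith
    rw [h3, ih, TT_local0, TT_zero a b c (Nat.lt_succ_self n),
        poch_succ (c - a) n, poch_succ (c - b) n]
    push_cast
    ring

/-- Pfaff–Saalschütz summation of a terminating balanced ₃F₂ at 1
(parameters chosen so that no denominator vanishes). -/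
theorem saalschuetz_summation (n : ℕ) (a b c : ℝ)
    (hden : ∀ k ≤ n, poch c k ≠ 0 ∧ poch (-(n : ℝ) + a + b - c + 1) k ≠ 0)
    (hc : poch c n ≠ 0) (hcab : poch (c - a - b) n ≠ 0) :
    ∑ k ∈ Finset.range (n + 1),
      poch (-(n : ℝ)) k * poch a k * poch b k /
        (poch c k * poch (-(n : ℝ) + a + b - c + 1) k * (Nat.factorial k)) =
    poch (c - a) n * poch (c - b) n / (poch c n * poch (c - a - b) n) := by
  set E : ℝ := -(n : ℝ) + a + b - c + 1 with hE
  have hen : poch E n ≠ 0 := (hden n le_rfl).2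
  have hterm : ∀ k ∈ Finset.range (n + 1),
      poch (-(n : ℝ)) k * poch a k * poch b k /
          (poch c k * poch E k * (Nat.factorial k : ℝ))
        = TT a b c n k / (poch c n * poch E n) := by
    intro k hk
    have hk' : k ≤ n := Nat.lt_succ_iff.mp (Finset.mem_range.mp hk)
    have hsplitc : poch c n = poch c k * poch (c + k) (n - k) := by
      have h := poch_add c k (n - k)
      rwa [Nat.add_sub_cancel' hk'] at h
    have hsplite : poch E n = poch E k * poch (E + k) (n - k) := by
      have h := poch_add E k (n - k)
      rwa [Nat.add_sub_cancel' hk'] at h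
    have hck : poch c k ≠ 0 := (hden k hk').1
    have hek : poch E k ≠ 0 := (hden k hk').2
    have hQ1 : poch (c + k) (n - k) ≠ 0 := by
      intro h0; exact hc (by rw [hsplitc, h0, mul_zero])
    have hQ2 : poch (E + k) (n - k) ≠ 0 := by
      intro h0; exact hen (by rw [hsplite, h0, mul_zero])
    have hfk : (Nat.factorial k : ℝ) ≠ 0 := Nat.cast_ne_zero.mpr k.factorial_ne_zero
    have hdf : (n.descFactorial k : ℝ) = (Nat.factorial k : ℝ) * (n.choose k : ℝ) := by
      exact_mod_cast congrArg (Nat.cast : ℕ → ℝ) (Nat.descFactorial_eq_factorial_mul_choose n k)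
    rw [poch_neg_nat n k hk']
    unfold TT
    rw [poch_congr (show (a + b - c + 1 - (n:ℝ) + (k:ℝ)) = E + k from by rw [hE]; ring) (n - k)]
    rw [hsplitc, hsplite, hdf]
    field_simp
  rw [Finset.sum_congr rfl hterm, ← Finset.sum_div, TT_sum]
  have hrefl : poch E n = (-1) ^ n * poch (c - a - b) n := by
    have h := poch_reflect (c - a - b) n
    rwa [poch_congr (show (-(c - a - b) - (n:ℝ) + 1) = E from by rw [hE]; ring) n] at h
  have hm1 : ((-1 : ℝ)) ^ n * (-1) ^ n = 1 := by
    rw [← mul_pow]; norm_num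
  rw [hrefl]
  rw [div_eq_div_iff (by exact mul_ne_zero hc (hrefl ▸ hen))
    (mul_ne_zero hc hcab)]
  ring
end

section
/- Define c_i^*(x) = (2^i/i!) ∑_{k=0}^{i-2} binom(α+1, i-k-2) binom(i-2α-5, k) ((1-x)/2)^k for i ≥ 2. Then c_i^*(x) = (2^i/i!) P_{i-2}^{(α-i+3, α-i+3)}(x), where the ultraspherical polynomial with possibly non-classical parameter is defined by P_n^{(β,β)}(x) = (1/n!) ∑_{k=0}^{n} binom(n,k)(n+2β+1)_k(β+k+1)_{n-k}((x-1)/2)^k. -/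
/-- Generalized binomial coefficient `binom(a, m) = a(a-1)⋯(a-m+1)/m!` for real `a`. -/
noncomputable def rbinom (a : ℝ) (m : ℕ) : ℝ :=
  (∏ j ∈ Finset.range m, (a - j)) / (Nat.factorial m : ℝ)

/-- The ultraspherical polynomial with possibly non-classical parameter `β`, defined by
`P_n^{(β,β)}(x) = (1/n!) ∑_{k=0}^n C(n,k) (n+2β+1)_k (β+k+1)_{n-k} ((x-1)/2)^k`. -/
noncomputable def ultraAlt (n : ℕ) (β : ℝ) (x : ℝ) : ℝ :=
  (1 / (Nat.factorial n : ℝ)) *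
    ∑ k ∈ Finset.range (n + 1),
      (n.choose k : ℝ) * poch ((n : ℝ) + 2 * β + 1) k * poch (β + k + 1) (n - k) *
        ((x - 1) / 2) ^ k


lemma fall_eq_poch (a : ℝ) (m : ℕ) :
    (∏ j ∈ Finset.range m, (a - j)) = poch (a - m + 1) m := by
  unfold poch
  rw [← Finset.prod_range_reflect (fun j => a - m + 1 + j) m]
  apply Finset.prod_congr rfl
  intro j hj
  have hj' : j < m := Finset.mem_range.mp hj
  have hc : ((m - 1 - j : ℕ) : ℝ) = (m : ℝ) - 1 - j := by
    rw [Nat.cast_sub (by omega), Nat.cast_sub (by omega)]; push_cast; ring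
  rw [hc]; ring

lemma fall_eq_neg_poch (a : ℝ) (k : ℕ) :
    (∏ j ∈ Finset.range k, (a - j)) = (-1) ^ k * poch (-a) k := by
  induction k with
  | zero => simp [poch]
  | succ k ih =>
    rw [Finset.prod_range_succ, ih]
    unfold poch
    rw [Finset.prod_range_succ]
    ring

/-- The coefficients `c_i^*(x)` equal `(2^i/i!) P_{i-2}^{(α-i+3,α-i+3)}(x)`. -/
theorem c_star_eq_ultra (α : ℝ) (i : ℕ) (hi : 2 ≤ i) (x : ℝ) :
    (2 ^ i / (Nat.factorial i : ℝ)) *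
      ∑ k ∈ Finset.range (i - 1),
        rbinom (α + 1) (i - k - 2) * rbinom ((i : ℝ) - 2 * α - 5) k * ((1 - x) / 2) ^ k
    = (2 ^ i / (Nat.factorial i : ℝ)) * ultraAlt (i - 2) (α - i + 3) x := by
  obtain ⟨n, rfl⟩ : ∃ n, i = n + 2 := ⟨i - 2, by omega⟩
  congr 1
  have h1 : n + 2 - 1 = n + 1 := by omega
  have h2 : n + 2 - 2 = n := by omega
  rw [h1, h2]
  unfold ultraAlt
  rw [Finset.mul_sum]
  apply Finset.sum_congr rfl
  intro k hk
  have hk' : k ≤ n := by have := Finset.mem_range.mp hk; omega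
  have h3 : n + 2 - k - 2 = n - k := by omega
  rw [h3]
  unfold rbinom
  rw [fall_eq_poch (α + 1) (n - k), fall_eq_neg_poch]
  have hnk : ((n - k : ℕ) : ℝ) = (n : ℝ) - k := by rw [Nat.cast_sub hk']
  have e1 : α + 1 - (n - k : ℕ) + 1 = (α - ((n:ℕ)+2) + 3) + k + 1 := by
    rw [hnk]; push_cast; ring
  have e2 : -(((n:ℕ)+2 : ℕ) - 2 * α - 5) = ((n:ℝ) + 2 * (α - ((n:ℕ)+2) + 3) + 1) := by
    push_cast; ring
  rw [e1, e2]
  have e3 : ((x - 1) / 2) ^ k = (-1)^k * ((1 - x) / 2) ^ k := by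
    rw [← mul_pow]; ring_nf
  rw [e3]
  rw [Nat.cast_choose ℝ hk']
  have f1 : (Nat.factorial (n - k) : ℝ) ≠ 0 := by positivity
  have f2 : (Nat.factorial k : ℝ) ≠ 0 := by positivity
  have f3 : (Nat.factorial n : ℝ) ≠ 0 := by positivity
  field_simp
  push_cast
  ring_nf
end

section
/- If y(x) = f(2x²-1) with f smooth, then for every integer i ≥ 0: y^{(i)}(x) = ∑_{j=⌈i/2⌉}^{i} (i! · 2^{3j-i} / ((2j-i)! (i-j)!)) · x^{2j-i} · f^{(j)}(2x²-1). -/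
noncomputable def qc (i j : ℕ) : ℝ :=
  if i ≤ 2*j ∧ j ≤ i then
    (Nat.factorial i : ℝ) * 2 ^ (3*j - i) /
      ((Nat.factorial (2*j - i) : ℝ) * (Nat.factorial (i - j) : ℝ))
  else 0

lemma qc_rec (i j : ℕ) :
    qc (i+1) (j+1) = (↑(2*(j+1) - i) : ℝ) * qc i (j+1) + 4 * qc i j := by
  unfold qc
  split_ifs with h1 h2 h3 h2 h3 <;> try omega
  · -- all conditions hold: i ≤ 2j, j+1 ≤ i
    have ha : 2*(j+1) - (i+1) = (2*j-i)+1 := by omega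
    have hb : 3*(j+1) - (i+1) = (3*j-i)+2 := by omega
    have hc : 2*(j+1) - i = (2*j-i)+2 := by omega
    have hd : 3*(j+1) - i = (3*j-i)+3 := by omega
    have he : i - j = (i-(j+1))+1 := by omega
    have hf : i + 1 - (j+1) = (i-(j+1))+1 := by omega
    rw [ha, hb, hc, hd, he, hf]
    set a := 2*j-i with hA
    set b := 3*j-i with hB
    set c := i-(j+1) with hC
    have hi' : (i:ℝ) = (a:ℝ) + 2*(c:ℝ) + 2 := by
      have : i = a + 2*c + 2 := by omega
      exact_mod_cast congrArg (Nat.cast : ℕ → ℝ) this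
    rw [Nat.factorial_succ i, Nat.factorial_succ (a+1), Nat.factorial_succ a,
      Nat.factorial_succ c]
    push_cast
    rw [hi']
    have fa := (a.factorial_pos).ne'
    have fc := (c.factorial_pos).ne'
    field_simp
    ring
  · -- i = 2j+1 case
    have hij : i = 2*j+1 := by omega
    subst hij
    have e1 : 3*(j+1) - (2*j+1+1) = j+1 := by omega
    have e2 : 2*(j+1) - (2*j+1+1) = 0 := by omega
    have e3 : 2*j+1+1 - (j+1) = j+1 := by omega
    have e4 : 2*(j+1) - (2*j+1) = 1 := by omega
    have e5 : 3*(j+1) - (2*j+1) = j+2 := by omega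
    have e6 : 2*j+1 - (j+1) = j := by omega
    rw [e1, e2, e3, e4, e5, e6, Nat.factorial_succ (2*j+1), Nat.factorial_succ j]
    simp only [Nat.factorial_zero, Nat.factorial_one]
    push_cast
    have fj := (j.factorial_pos).ne'
    have f2j := ((2*j+1).factorial_pos).ne'
    field_simp
    ring
  · -- j = i case
    have hji : j = i := by omega
    subst hji
    have e1 : 3*(j+1) - (j+1) = 2*j+2 := by omega
    have e2 : 2*(j+1) - (j+1) = j+1 := by omega
    have e3 : j - j = 0 := by omega
    have e4 : 3*j - j = 2*j := by omega
    have e5 : 2*j - j = j := by omega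
    rw [e1, e2, e3, e4, e5]
    simp only [Nat.factorial_zero, Nat.sub_self]
    have fj := ((j+1).factorial_pos).ne'
    have fj2 := (j.factorial_pos).ne'
    rw [pow_succ, pow_succ]
    field_simp
    ring
  · -- h1 fails, middle holds: coefficient must be zero
    have : 2*(j+1) - i = 0 := by omega
    rw [this]
    simp
  · simp

lemma qc_eq_zero {i j : ℕ} (h : ¬(i ≤ 2*j ∧ j ≤ i)) : qc i j = 0 := by
  simp [qc, h]

lemma aux_sum (f : ℝ → ℝ) (hf : ContDiff ℝ (⊤ : ℕ∞) f) (i : ℕ) :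
    ∀ x : ℝ, iteratedDeriv i (fun x => f (2 * x ^ 2 - 1)) x =
      ∑ j ∈ Finset.range (i+1),
        qc i j * x ^ (2*j - i) * iteratedDeriv j f (2 * x ^ 2 - 1) := by
  induction i with
  | zero =>
    intro x
    simp [qc]
  | succ i IH =>
    intro x
    have hF : ∀ j : ℕ, HasDerivAt (fun y : ℝ => iteratedDeriv j f (2 * y ^ 2 - 1))
        (iteratedDeriv (j+1) f (2 * x ^ 2 - 1) * (4 * x)) x := by
      intro j
      have h1 : HasDerivAt (fun y : ℝ => 2 * y ^ 2 - 1) (4 * x) x := by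
        have := ((hasDerivAt_pow 2 x).const_mul (2:ℝ)).sub_const 1
        exact this.congr_deriv (by norm_num; ring)
      have hd : DifferentiableAt ℝ (iteratedDeriv j f) (2 * x ^ 2 - 1) := by
        have := hf.differentiable_iteratedDeriv j (by exact_mod_cast ENat.natCast_lt_top j)
        exact this _
      have h2 : HasDerivAt (iteratedDeriv j f)
          (iteratedDeriv (j+1) f (2 * x ^ 2 - 1)) (2 * x ^ 2 - 1) := by
        rw [iteratedDeriv_succ]
        exact hd.hasDerivAt
      exact h2.comp x h1
    have hterm : ∀ j : ℕ, HasDerivAt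
        (fun y : ℝ => qc i j * y ^ (2*j - i) * iteratedDeriv j f (2 * y ^ 2 - 1))
        (qc i j * (↑(2*j - i) * x ^ (2*j - i - 1)) * iteratedDeriv j f (2 * x ^ 2 - 1)
          + qc i j * x ^ (2*j - i) * (iteratedDeriv (j+1) f (2 * x ^ 2 - 1) * (4 * x))) x :=
      fun j => ((hasDerivAt_pow _ x).const_mul (qc i j)).mul (hF j)
    have hsum : HasDerivAt
        (fun y : ℝ => ∑ j ∈ Finset.range (i+1),
          qc i j * y ^ (2*j - i) * iteratedDeriv j f (2 * y ^ 2 - 1))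
        (∑ j ∈ Finset.range (i+1),
          (qc i j * (↑(2*j - i) * x ^ (2*j - i - 1)) * iteratedDeriv j f (2 * x ^ 2 - 1)
          + qc i j * x ^ (2*j - i) * (iteratedDeriv (j+1) f (2 * x ^ 2 - 1) * (4 * x)))) x :=
      HasDerivAt.fun_sum (fun j _ => hterm j)
    rw [iteratedDeriv_succ,
      show iteratedDeriv i (fun x => f (2 * x ^ 2 - 1))
        = (fun y : ℝ => ∑ j ∈ Finset.range (i+1),
            qc i j * y ^ (2*j - i) * iteratedDeriv j f (2 * y ^ 2 - 1)) from funext IH,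
      hsum.deriv]
    rw [Finset.sum_add_distrib, Finset.sum_range_succ' _ (i+1)]
    have hz0 : qc (i+1) 0 = 0 := qc_eq_zero (by omega)
    rw [hz0]
    simp only [zero_mul, add_zero]
    have hS2 : ∑ j ∈ Finset.range (i+1),
        qc i j * x ^ (2*j - i) * (iteratedDeriv (j+1) f (2 * x ^ 2 - 1) * (4 * x))
        = ∑ j ∈ Finset.range (i+1),
          4 * qc i j * x ^ (2*(j+1) - (i+1)) * iteratedDeriv (j+1) f (2 * x ^ 2 - 1) := by
      refine Finset.sum_congr rfl fun j _ => ?_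
      by_cases h : i ≤ 2*j
      · have : 2*(j+1) - (i+1) = (2*j - i) + 1 := by omega
        rw [this, pow_succ]; ring
      · rw [qc_eq_zero (by omega)]; ring
    have hS1 : ∑ j ∈ Finset.range (i+1),
        qc i j * (↑(2*j - i) * x ^ (2*j - i - 1)) * iteratedDeriv j f (2 * x ^ 2 - 1)
        = ∑ j ∈ Finset.range (i+1),
          (↑(2*(j+1) - i) : ℝ) * qc i (j+1) * x ^ (2*(j+1) - (i+1))
            * iteratedDeriv (j+1) f (2 * x ^ 2 - 1) := by
      rw [Finset.sum_range_succ' _ i, Finset.sum_range_succ _ i]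
      have hz1 : qc i (i+1) = 0 := qc_eq_zero (by omega)
      have hz2 : ((2*0 - i : ℕ) : ℝ) = 0 := by norm_num
      rw [hz1, hz2]
      simp only [mul_zero, zero_mul, add_zero]
      refine Finset.sum_congr rfl fun j _ => ?_
      have : 2*(j+1) - i - 1 = 2*(j+1) - (i+1) := by omega
      rw [this]; ring
    rw [hS1, hS2, ← Finset.sum_add_distrib]
    refine Finset.sum_congr rfl fun j _ => ?_
    rw [qc_rec]
    ring

/-- Higher-derivative chain rule for the quadratic substitution `t = 2x² - 1`. -/
theorem iteratedDeriv_quadratic_sub (f : ℝ → ℝ) (hf : ContDiff ℝ (⊤ : ℕ∞) f) (i : ℕ) (x : ℝ) :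
    iteratedDeriv i (fun x => f (2 * x ^ 2 - 1)) x =
      ∑ j ∈ Finset.Icc ((i + 1) / 2) i,
        ((Nat.factorial i : ℝ) * 2 ^ (3 * j - i) /
            ((Nat.factorial (2 * j - i) : ℝ) * (Nat.factorial (i - j) : ℝ))) *
          x ^ (2 * j - i) * iteratedDeriv j f (2 * x ^ 2 - 1) := by
  rw [aux_sum f hf i x]
  have h1 : ∑ j ∈ Finset.Icc ((i + 1) / 2) i,
        ((Nat.factorial i : ℝ) * 2 ^ (3 * j - i) /
            ((Nat.factorial (2 * j - i) : ℝ) * (Nat.factorial (i - j) : ℝ))) *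
          x ^ (2 * j - i) * iteratedDeriv j f (2 * x ^ 2 - 1)
      = ∑ j ∈ Finset.Icc ((i + 1) / 2) i,
          qc i j * x ^ (2*j - i) * iteratedDeriv j f (2 * x ^ 2 - 1) := by
    refine Finset.sum_congr rfl fun j hj => ?_
    rw [Finset.mem_Icc] at hj
    rw [qc, if_pos (by omega)]
  rw [h1]
  refine (Finset.sum_subset ?_ ?_).symm
  · intro j hj
    rw [Finset.mem_Icc] at hj
    rw [Finset.mem_range]; omega
  · intro j hj hj'
    rw [Finset.mem_range] at hj
    rw [Finset.mem_Icc] at hj'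
    rw [qc_eq_zero (by omega)]
    ring
end
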